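/- Let T be a spherically homogeneous rooted tree, let G ≤ Aut T be a weakly branch group, and let ρ : G → Aut T be another weakly branch action of G on the same tree T. Then for every n ≥ 1 there exists k ≥ n such that St_G(k) ≤ St_ρ(n). In particular, the congruence topologies on G arising from different weakly branch actions on T coincide. -/

import Mathlib

open Equiv

/-- Vertices of the spherically homogeneous rooted tree of type `m`: finite sequences
`(v_0, …, v_{n−1})` with `v_i ∈ Fin (m i)`. -/
def Vertex (m : ℕ → ℕ) : Type := (n : ℕ) × (∀ i : Fin n, Fin (m i))

/-- `u` is a prefix of `v` (i.e. `u` is an ancestor of `v`, or `u = v`). -/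
def IsPrefixV {m : ℕ → ℕ} (u v : Vertex m) : Prop :=
  u.1 ≤ v.1 ∧ ∀ (i : ℕ) (hu : i < u.1) (hv : i < v.1), (u.2 ⟨i, hu⟩ : ℕ) = (v.2 ⟨i, hv⟩ : ℕ)

/-- The automorphism group `Aut T` of the tree: the permutations of the vertex set which
preserve the length (level) and the prefix relation. -/
def treeAut (m : ℕ → ℕ) : Subgroup (Perm (Vertex m)) where
  carrier := {f | (∀ v, (f v).1 = v.1) ∧ ∀ u v, IsPrefixV u v ↔ IsPrefixV (f u) (f v)}
  one_mem' := ⟨fun _ => rfl, fun _ _ => by simp⟩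
  mul_mem' := by
    rintro f g ⟨hf1, hf2⟩ ⟨hg1, hg2⟩
    refine ⟨fun v => ?_, fun u v => ?_⟩
    · rw [Perm.mul_apply, hf1, hg1]
    · rw [Perm.mul_apply, Perm.mul_apply, ← hf2, ← hg2]
  inv_mem' := by
    rintro f ⟨hf1, hf2⟩
    refine ⟨fun v => ?_, fun u v => ?_⟩
    · have h := hf1 (f⁻¹ v)
      rw [show f (f⁻¹ v) = v from f.apply_symm_apply v] at h
      exact h.symm
    · have h := hf2 (f⁻¹ u) (f⁻¹ v)
      simp only [show ∀ x, f (f⁻¹ x) = x from fun x => f.apply_symm_apply x] at h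
      exact h.symm

variable {m : ℕ → ℕ}

/-- The stabilizer `st_G(v)` of a vertex `v` in `G`. -/
def st (G : Subgroup (Perm (Vertex m))) (v : Vertex m) : Subgroup (Perm (Vertex m)) :=
  G ⊓ MulAction.stabilizer (Perm (Vertex m)) v

/-- The rigid vertex stabilizer `rist_G(v)`: elements of `G` fixing every vertex that does not
have `v` as a prefix. -/
def rist (G : Subgroup (Perm (Vertex m))) (v : Vertex m) : Subgroup (Perm (Vertex m)) :=
  G ⊓ fixingSubgroup (Perm (Vertex m)) {u | ¬ IsPrefixV v u}

/-- The level stabilizer `St_G(n)`: the pointwise stabilizer in `G` of all vertices of length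
`n`. -/
def StL (G : Subgroup (Perm (Vertex m))) (n : ℕ) : Subgroup (Perm (Vertex m)) :=
  G ⊓ fixingSubgroup (Perm (Vertex m)) {u : Vertex m | u.1 = n}

/-- `G` acts transitively on every level of the tree. -/
def LevelTransitive (G : Subgroup (Perm (Vertex m))) : Prop :=
  ∀ u v : Vertex m, u.1 = v.1 → ∃ g ∈ G, g u = v

/-- `G` is weakly branch: level-transitive with all rigid vertex stabilizers infinite. -/
def IsWeaklyBranch (G : Subgroup (Perm (Vertex m))) : Prop :=
  LevelTransitive G ∧ ∀ v : Vertex m, Infinite (rist G v)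

/-- The conjugate subgroup `g B g⁻¹`. -/
def conjS {Γ : Type*} [Group Γ] (g : Γ) (B : Subgroup Γ) : Subgroup Γ :=
  Subgroup.map (MulAut.conj g).toMonoidHom B

/-- A weakly branch action of a group `G` on the tree of type `m`: an injective homomorphism
into `Aut T` whose image is weakly branch. -/
def IsWBAction {G : Type*} [Group G] (m : ℕ → ℕ) (ρ : G →* Perm (Vertex m)) : Prop :=
  Function.Injective ρ ∧ ρ.range ≤ treeAut m ∧ IsWeaklyBranch ρ.range

/-- `G` is `T`-rigid: it admits a weakly branch action on `T` and the images of any two weakly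
branch actions are conjugate in `Aut T`. -/
def TRigid (G : Type*) [Group G] (m : ℕ → ℕ) : Prop :=
  (∃ ρ : G →* Perm (Vertex m), IsWBAction m ρ) ∧
  ∀ ρ τ : G →* Perm (Vertex m), IsWBAction m ρ → IsWBAction m τ →
    ∃ f ∈ treeAut m, τ.range = conjS f ρ.range

/-- `st_ρ(v) = ρ⁻¹(st_{ρ(G)}(v))`. -/
def stA {G : Type*} [Group G] (ρ : G →* Perm (Vertex m)) (v : Vertex m) : Subgroup G :=
  Subgroup.comap ρ (st ρ.range v)

/-- `rist_ρ(v) = ρ⁻¹(rist_{ρ(G)}(v))`. -/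
def ristA {G : Type*} [Group G] (ρ : G →* Perm (Vertex m)) (v : Vertex m) : Subgroup G :=
  Subgroup.comap ρ (rist ρ.range v)

theorem Equiv.Perm.apply_inv_self {α : Type*} (f : Perm α) (x : α) : f (f⁻¹ x) = x :=
  f.apply_symm_apply x

theorem Equiv.inv_apply_self {α : Type*} (f : Perm α) (x : α) : f⁻¹ (f x) = x :=
  f.symm_apply_apply x

namespace CTUaux

lemma mem_treeAut_iff {f : Perm (Vertex m)} :
    f ∈ treeAut m ↔ (∀ v, (f v).1 = v.1) ∧ ∀ u v, IsPrefixV u v ↔ IsPrefixV (f u) (f v) :=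
  Iff.rfl

lemma mem_rist_iff {W : Subgroup (Perm (Vertex m))} {v : Vertex m} {x : Perm (Vertex m)} :
    x ∈ rist W v ↔ x ∈ W ∧ ∀ z, ¬ IsPrefixV v z → x z = z := by
  simp [rist, Subgroup.mem_inf, mem_fixingSubgroup_iff, Perm.smul_def]

lemma mem_StL_iff {W : Subgroup (Perm (Vertex m))} {k : ℕ} {x : Perm (Vertex m)} :
    x ∈ StL W k ↔ x ∈ W ∧ ∀ z : Vertex m, z.1 = k → x z = z := by
  simp [StL, Subgroup.mem_inf, mem_fixingSubgroup_iff, Perm.smul_def]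

lemma vertex_ext {u v : Vertex m} (h1 : u.1 = v.1)
    (h2 : ∀ (i : ℕ) (hu : i < u.1) (hv : i < v.1), (u.2 ⟨i, hu⟩ : ℕ) = (v.2 ⟨i, hv⟩ : ℕ)) :
    u = v := by
  obtain ⟨a, f⟩ := u
  obtain ⟨b, g⟩ := v
  dsimp at h1
  subst h1
  have hfg : f = g := by
    funext i
    exact Fin.ext (by simpa using h2 i.1 i.2 i.2)
  rw [hfg]

lemma prefV_trans {u v w : Vertex m} (h1 : IsPrefixV u v) (h2 : IsPrefixV v w) :
    IsPrefixV u w := by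
  refine ⟨le_trans h1.1 h2.1, fun i hu hw => ?_⟩
  have hv : i < v.1 := lt_of_lt_of_le hu h1.1
  rw [h1.2 i hu hv, h2.2 i hv hw]

lemma prefV_eq_of_level {u v : Vertex m} (h : IsPrefixV u v) (hl : u.1 = v.1) : u = v :=
  vertex_ext hl h.2

lemma prefV_unique {a b z : Vertex m} (ha : IsPrefixV a z) (hb : IsPrefixV b z)
    (hl : a.1 = b.1) : a = b := by
  refine vertex_ext hl fun i hu hv => ?_
  have hz : i < z.1 := lt_of_lt_of_le hu ha.1
  rw [ha.2 i hu hz, hb.2 i hv hz]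

lemma exists_ext (hm : ∀ n, 2 ≤ m n) (v : Vertex m) (k : ℕ) (hk : v.1 ≤ k) :
    ∃ z : Vertex m, z.1 = k ∧ IsPrefixV v z := by
  refine ⟨⟨k, fun i => if h : (i : ℕ) < v.1 then v.2 ⟨i, h⟩ else ⟨0, lt_of_lt_of_le two_pos (hm i)⟩⟩,
    rfl, hk, fun i hu hv => ?_⟩
  simp [hu]


lemma fix_below (hm : ∀ n, 2 ≤ m n) {f : Perm (Vertex m)} (hf : f ∈ treeAut m) {k : ℕ}
    (hfix : ∀ z : Vertex m, z.1 = k → f z = z) {v : Vertex m} (hv : v.1 ≤ k) : f v = v := by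
  obtain ⟨z, hz, hpre⟩ := exists_ext hm v k hv
  have h1 : IsPrefixV (f v) (f z) := (hf.2 v z).mp hpre
  rw [hfix z hz] at h1
  exact prefV_unique h1 hpre (by rw [hf.1])

lemma rist_fixes_self {f : Perm (Vertex m)} (hf : f ∈ treeAut m) {u : Vertex m}
    (hfix : ∀ z, ¬ IsPrefixV u z → f z = z) : f u = u := by
  by_contra h
  have h2 : ¬ IsPrefixV u (f u) := fun hp => h (prefV_eq_of_level hp (hf.1 u).symm).symm
  have h3 : f (f u) = f u := hfix _ h2
  exact h (f.injective h3)

lemma not_prefV_of_ne {u u' z : Vertex m} (hl : u.1 = u'.1) (hne : u ≠ u')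
    (hz : IsPrefixV u z) : ¬ IsPrefixV u' z :=
  fun hz' => hne (prefV_unique hz hz' hl)

lemma prefV_apply {f : Perm (Vertex m)} (hf : f ∈ treeAut m) {u z : Vertex m}
    (hfu : f u = u) (hz : IsPrefixV u z) : IsPrefixV u (f z) := by
  have := (hf.2 u z).mp hz
  rwa [hfu] at this

lemma disjoint_rist_commute {x y : Perm (Vertex m)} (hx : x ∈ treeAut m) (hy : y ∈ treeAut m)
    {u u' : Vertex m} (hxu : ∀ z, ¬ IsPrefixV u z → x z = z)
    (hyu : ∀ z, ¬ IsPrefixV u' z → y z = z) (hlev : u.1 = u'.1) (hne : u ≠ u') :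
    x * y = y * x := by
  have hxfix : x u = u := rist_fixes_self hx hxu
  have hyfix : y u' = u' := rist_fixes_self hy hyu
  ext z
  simp only [Perm.mul_apply]
  by_cases hu : IsPrefixV u z
  · have hy1 : y z = z := hyu z (not_prefV_of_ne hlev hne hu)
    have hy2 : y (x z) = x z := hyu _ (not_prefV_of_ne hlev hne (prefV_apply hx hxfix hu))
    rw [hy1, hy2]
  · by_cases hu' : IsPrefixV u' z
    · have hx1 : x z = z := hxu z (fun h => (not_prefV_of_ne hlev hne h) hu')
      have hx2 : x (y z) = y z :=
        hxu _ (fun h => (not_prefV_of_ne hlev hne h) (prefV_apply hy hyfix hu'))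
      rw [hx1, hx2]
    · rw [hxu z hu, hyu z hu', hxu z hu]

lemma conj_rist {g x : Perm (Vertex m)} (hg : g ∈ treeAut m) {u : Vertex m}
    (hx : ∀ z, ¬ IsPrefixV u z → x z = z) :
    ∀ z, ¬ IsPrefixV (g u) z → (g * x * g⁻¹) z = z := by
  intro z hz
  have h1 : ¬ IsPrefixV u (g⁻¹ z) := by
    intro hp
    have := (hg.2 u (g⁻¹ z)).mp hp
    rw [Perm.apply_inv_self] at this
    exact hz this
  simp only [Perm.mul_apply, hx _ h1, Perm.apply_inv_self]

lemma conj_fix_level {g h : Perm (Vertex m)} (hg : g ∈ treeAut m) {k : ℕ}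
    (hh : ∀ z : Vertex m, z.1 = k → h z = z) :
    ∀ z : Vertex m, z.1 = k → (g * h * g⁻¹) z = z := by
  intro z hz
  have hlev : (g⁻¹ z).1 = k := by
    have := hg.1 (g⁻¹ z)
    rw [Perm.apply_inv_self] at this
    omega
  simp only [Perm.mul_apply, hh _ hlev, Perm.apply_inv_self]

lemma inv_fix_level {h : Perm (Vertex m)} {k : ℕ}
    (hh : ∀ z : Vertex m, z.1 = k → h z = z) :
    ∀ z : Vertex m, z.1 = k → h⁻¹ z = z := by
  intro z hz
  conv_lhs => rw [← hh z hz]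
  exact h.inv_apply_self z

lemma mul_fix_level {h h' : Perm (Vertex m)} {k : ℕ}
    (hh : ∀ z : Vertex m, z.1 = k → h z = z) (hh' : ∀ z : Vertex m, z.1 = k → h' z = z) :
    ∀ z : Vertex m, z.1 = k → (h * h') z = z := by
  intro z hz
  rw [Perm.mul_apply, hh' z hz, hh z hz]


lemma exists_ne_one_of_infinite (H : Subgroup (Perm (Vertex m))) (hI : Infinite H) :
    ∃ x ∈ H, x ≠ 1 := by
  have : Nontrivial H := Infinite.instNontrivial H
  obtain ⟨x, hx⟩ := exists_ne (1 : H)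
  exact ⟨x, x.2, fun h => hx (Subtype.ext (by simpa using h))⟩

lemma exists_moved {x : Perm (Vertex m)} (hx : x ≠ 1) : ∃ w, x w ≠ w := by
  by_contra h
  push_neg at h
  exact hx (Equiv.ext h)

lemma rist_mono {W : Subgroup (Perm (Vertex m))} {u w : Vertex m} (h : IsPrefixV u w) :
    rist W w ≤ rist W u := by
  intro x hx
  rw [mem_rist_iff] at hx ⊢
  exact ⟨hx.1, fun z hz => hx.2 z (fun hwz => hz (prefV_trans h hwz))⟩

lemma rist_nonabelian (W : Subgroup (Perm (Vertex m))) (hW : W ≤ treeAut m)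
    (hR : ∀ v : Vertex m, Infinite (rist W v)) (u : Vertex m) :
    ∃ x ∈ rist W u, ∃ y ∈ rist W u, x * y * x⁻¹ * y⁻¹ ≠ 1 := by
  obtain ⟨x, hx, hx1⟩ := exists_ne_one_of_infinite (rist W u) (hR u)
  obtain ⟨w, hw⟩ := exists_moved hx1
  have hxA : x ∈ treeAut m := hW ((mem_rist_iff.mp hx).1)
  have huw : IsPrefixV u w := by
    by_contra h
    exact hw ((mem_rist_iff.mp hx).2 w h)
  obtain ⟨y, hy, hy1⟩ := exists_ne_one_of_infinite (rist W w) (hR w)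
  have hyA : y ∈ treeAut m := hW ((mem_rist_iff.mp hy).1)
  obtain ⟨z₀, hz₀⟩ := exists_moved hy1
  have hwz₀ : IsPrefixV w z₀ := by
    by_contra h
    exact hz₀ ((mem_rist_iff.mp hy).2 z₀ h)
  refine ⟨x, hx, y, rist_mono huw hy, fun hc => ?_⟩
  -- evaluate at p := x z₀
  have hplev : IsPrefixV (x w) (x z₀) := (hxA.2 w z₀).mp hwz₀
  have hxw_ne : x w ≠ w := fun h => hw h
  have hnp : ¬ IsPrefixV w (x z₀) :=
    fun h => hxw_ne (prefV_unique hplev h (by rw [hxA.1]))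
  have hyp : y⁻¹ (x z₀) = x z₀ := by
    have := (mem_rist_iff.mp hy).2 (x z₀) hnp
    conv_lhs => rw [← this]
    exact y.inv_apply_self _
  have := congrArg (fun f : Perm (Vertex m) => f (x z₀)) hc
  simp only [Perm.mul_apply, Perm.one_apply, hyp] at this
  -- this : x (y (x⁻¹ (x z₀))) = x z₀
  rw [x.inv_apply_self] at this
  exact hz₀ (x.injective this)

lemma key_identity {g x y : Perm (Vertex m)} (hg : g ∈ treeAut m)
    (hx : x ∈ treeAut m) (hy : y ∈ treeAut m) {u : Vertex m} (hgu : g u ≠ u)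
    (hxu : ∀ z, ¬ IsPrefixV u z → x z = z) (hyu : ∀ z, ¬ IsPrefixV u z → y z = z) :
    (g * x * g⁻¹ * x⁻¹) * y * (g * x * g⁻¹ * x⁻¹)⁻¹ * y⁻¹ = x⁻¹ * y * x * y⁻¹ := by
  set g' := g * x * g⁻¹ with hg'
  have hg'A : g' ∈ treeAut m := mul_mem (mul_mem (hg) hx) (inv_mem hg)
  have hg'fix : ∀ z, ¬ IsPrefixV (g u) z → g' z = z := conj_rist hg hxu
  have hlev : (g u).1 = u.1 := hg.1 u
  -- w := x⁻¹ * y * x fixes outside u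
  have hxinv : ∀ z, ¬ IsPrefixV u z → x⁻¹ z = z := by
    intro z hz
    conv_lhs => rw [← hxu z hz]
    exact x.inv_apply_self z
  have hwfix : ∀ z, ¬ IsPrefixV u z → (x⁻¹ * y * x) z = z := by
    intro z hz
    simp only [Perm.mul_apply, hxu z hz, hyu z hz, hxinv z hz]
  have hwA : x⁻¹ * y * x ∈ treeAut m := mul_mem (mul_mem (inv_mem hx) hy) hx
  have hcomm : g' * (x⁻¹ * y * x) = (x⁻¹ * y * x) * g' :=
    disjoint_rist_commute hg'A hwA hg'fix hwfix hlev hgu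
  calc (g * x * g⁻¹ * x⁻¹) * y * (g * x * g⁻¹ * x⁻¹)⁻¹ * y⁻¹
      = g' * (x⁻¹ * y * x) * g'⁻¹ * y⁻¹ := by rw [hg']; group
    _ = (x⁻¹ * y * x) * g' * g'⁻¹ * y⁻¹ := by rw [hcomm]
    _ = x⁻¹ * y * x * y⁻¹ := by group

end CTUaux

open CTUaux

/-- **Uniqueness of the congruence topology.** Let `G ≤ Aut T` be a weakly branch group and
let `ρ : G → Aut T` be another weakly branch action of `G` on the same tree `T`. Then for
every `n ≥ 1` there exists `k ≥ n` such that `St_G(k) ≤ St_ρ(n)`; consequently the congruence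
topologies arising from the two weakly branch actions coincide. -/
theorem congruence_topology_unique (m : ℕ → ℕ) (hm : ∀ n, 2 ≤ m n)
    (G : Subgroup (Perm (Vertex m))) (hG : G ≤ treeAut m) (hwb : IsWeaklyBranch G)
    (ρ : ↥G →* Perm (Vertex m)) (hρ : IsWBAction m ρ) :
    ∀ n : ℕ, 1 ≤ n → ∃ k, n ≤ k ∧
      (StL G k).subgroupOf G ≤ Subgroup.comap ρ (StL ρ.range n) := by
  classical
  obtain ⟨hinj, hrange, _hlt, hristW⟩ := hρ
  intro n _hn
  have hna : ∀ t : (∀ i : Fin n, Fin (m i)), ∃ x ∈ rist ρ.range (⟨n, t⟩ : Vertex m),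
      ∃ y ∈ rist ρ.range (⟨n, t⟩ : Vertex m), x * y * x⁻¹ * y⁻¹ ≠ 1 :=
    fun t => rist_nonabelian ρ.range hrange hristW ⟨n, t⟩
  choose p hp q hq hne using hna
  have hεmem : ∀ t, p t * q t * (p t)⁻¹ * (q t)⁻¹ ∈ ρ.range := by
    intro t
    have h1 := (mem_rist_iff.mp (hp t)).1
    have h2 := (mem_rist_iff.mp (hq t)).1
    exact mul_mem (mul_mem (mul_mem h1 h2) (inv_mem h1)) (inv_mem h2)
  choose gg hgg using hεmem
  have hmoved : ∀ t, ∃ z : Vertex m, (gg t : Perm (Vertex m)) z ≠ z := by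
    intro t
    apply exists_moved
    intro hone
    have h1 : gg t = 1 := Subtype.ext (by simpa using hone)
    have h2 := hgg t
    rw [h1, map_one] at h2
    exact hne t h2.symm
  choose zz hzz using hmoved
  set k := max n (Finset.univ.sup fun t : (∀ i : Fin n, Fin (m i)) => (zz t).1) with hk
  refine ⟨k, le_max_left _ _, ?_⟩
  intro h hmem
  rw [Subgroup.mem_subgroupOf] at hmem
  obtain ⟨hhG, hhfix⟩ := mem_StL_iff.mp hmem
  rw [Subgroup.mem_comap, mem_StL_iff]
  refine ⟨⟨h, rfl⟩, ?_⟩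
  rintro ⟨nu, t⟩ hu
  dsimp at hu
  subst hu
  by_contra hgu
  have hgA : ρ h ∈ treeAut m := hrange ⟨h, rfl⟩
  have hpr := mem_rist_iff.mp (hp t)
  have hqr := mem_rist_iff.mp (hq t)
  have hpA : p t ∈ treeAut m := hrange hpr.1
  have hqA : q t ∈ treeAut m := hrange hqr.1
  have hpinvfix : ∀ z, ¬ IsPrefixV (⟨nu, t⟩ : Vertex m) z → (p t)⁻¹ z = z := by
    intro z hz
    conv_lhs => rw [← hpr.2 z hz]
    exact (p t).inv_apply_self z
  have key := key_identity hgA (inv_mem hpA) hqA hgu hpinvfix hqr.2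
  simp only [inv_inv] at key
  obtain ⟨a, ha⟩ := hpr.1
  obtain ⟨b, hb⟩ := hqr.1
  set δ : ↥G := (h * a⁻¹ * h⁻¹ * a) * b * (h * a⁻¹ * h⁻¹ * a)⁻¹ * b⁻¹ with hδ
  have hρδ : ρ δ = p t * q t * (p t)⁻¹ * (q t)⁻¹ := by
    have h2 : ρ δ = (ρ h * (ρ a)⁻¹ * (ρ h)⁻¹ * ρ a) * ρ b *
        (ρ h * (ρ a)⁻¹ * (ρ h)⁻¹ * ρ a)⁻¹ * (ρ b)⁻¹ := by
      simp [hδ, map_mul, map_inv]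
    rw [h2, ha, hb, ← key]
  have hδeq : δ = gg t := hinj (by rw [hρδ, hgg t])
  have haG : (a : Perm (Vertex m)) ∈ treeAut m := hG a.2
  have hbG : (b : Perm (Vertex m)) ∈ treeAut m := hG b.2
  have hinvfix := inv_fix_level hhfix
  have hconj := conj_fix_level (inv_mem haG) hinvfix
  simp only [inv_inv] at hconj
  have hDfix : ∀ z : Vertex m, z.1 = k →
      ((h : Perm (Vertex m)) * (a : Perm (Vertex m))⁻¹ * (h : Perm (Vertex m))⁻¹
        * (a : Perm (Vertex m))) z = z := by
    intro z hz
    have := mul_fix_level hhfix hconj z hz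
    simpa [mul_assoc] using this
  have hDinv := inv_fix_level hDfix
  have hconj2 := conj_fix_level hbG hDinv
  have hδfix : ∀ z : Vertex m, z.1 = k → ((δ : ↥G) : Perm (Vertex m)) z = z := by
    intro z hz
    have hcoe : ((δ : ↥G) : Perm (Vertex m)) =
        ((h : Perm (Vertex m)) * (a : Perm (Vertex m))⁻¹ * (h : Perm (Vertex m))⁻¹
          * (a : Perm (Vertex m))) * (b : Perm (Vertex m)) *
        ((h : Perm (Vertex m)) * (a : Perm (Vertex m))⁻¹ * (h : Perm (Vertex m))⁻¹
          * (a : Perm (Vertex m)))⁻¹ * (b : Perm (Vertex m))⁻¹ := by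
      simp [hδ]
    rw [hcoe]
    have h3 := mul_fix_level hDfix hconj2 z hz
    simpa [mul_assoc] using h3
  have hggA : ((gg t : ↥G) : Perm (Vertex m)) ∈ treeAut m := hG (gg t).2
  have hfixz : ((gg t : ↥G) : Perm (Vertex m)) (zz t) = zz t := by
    apply fix_below hm hggA (fun z hz => by rw [← hδeq]; exact hδfix z hz)
    rw [hk]
    exact le_trans (Finset.le_sup (f := fun t => (zz t).1) (Finset.mem_univ t)) (le_max_right _ _)
  exact hzz t hfixz
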